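/- arXiv:0804.4284 — 2 statements merged into one kernel-verified Lean document; each statement's English description precedes it below -/
import Mathlib

section
/- The event that the interference sums of all n nodes concentrate simultaneously has probability at least 1 − 2/n: Pr( for every node j, (1−ε₂)·E[I] ≤ I(j) ≤ (1+ε₂′)·E[I] ) ≥ 1 − 2/n, where ε₂ = sqrt( 4 ln n / ((n−1)·E[P]·E[L]) ) and ε₂′ = sqrt( 6 ln n / ((n−1)·E[P]·E[L]) ), provided ε₂ ≤ 1 and ε₂′ ≤ 1. -/
/-!
Fix a node `j`. Since the uniform measure on the torus is translation invariant, conditionally on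
`X j` the displacements `X k - X j`, `k ≠ j`, are again independent and uniform, and they remain
independent of the powers. Hence the `n - 1` summands `P k * L (d_kj)` of `I(j)` are independent,
`[0, 1]`-valued and of mean `E[P] E[L]`, so the multiplicative Chernoff bounds `exp (-ε² E[I] / 2)`
(lower tail) and `exp (-ε² E[I] / 3)` (upper tail) apply. For `ε₂` and `ε₂'` both bounds equal
`1 / n²`, and a union bound over the `n` nodes gives `2 / n`.
-/

open MeasureTheory ProbabilityTheory

abbrev Torus : Type := AddCircle (1 : ℝ) × AddCircle (1 : ℝ)

instance : (volume : Measure Torus).IsAddRightInvariant :=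
  inferInstanceAs ((volume : Measure (AddCircle (1 : ℝ))).prod volume).IsAddRightInvariant

instance : IsProbabilityMeasure (volume : Measure (AddCircle (1 : ℝ))) :=
  ⟨by simp [AddCircle.measure_univ]⟩

instance : IsProbabilityMeasure (volume : Measure Torus) :=
  inferInstanceAs (IsProbabilityMeasure ((volume : Measure (AddCircle (1 : ℝ))).prod volume))

namespace Real

lemma sq_div_two_le_one_sub_mul_log_one_sub_add {ε : ℝ} (h0 : 0 ≤ ε) (h1 : ε < 1) :
    ε ^ 2 / 2 ≤ (1 - ε) * log (1 - ε) + ε := by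
  have hpos : 0 < 1 - ε := by linarith
  have h := self_le_sinh_iff.2 (neg_nonneg.2 (log_nonpos hpos.le (by linarith)))
  rw [← log_inv, sinh_log (inv_pos.2 hpos), inv_inv] at h
  have hexpand : (1 - ε) * ((1 - ε)⁻¹ - (1 - ε)) = 1 - (1 - ε) ^ 2 := by field_simp
  nlinarith [mul_le_mul_of_nonneg_left h hpos.le, log_inv (1 - ε)]

lemma exp_le_one_add_add_sq {t : ℝ} (h0 : 0 ≤ t) (h1 : t ≤ 1) :
    exp t ≤ 1 + t + 3 / 4 * t ^ 2 := by
  have h := exp_bound' h0 h1 (n := 2) two_pos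
  norm_num [Finset.sum_range_succ, Nat.factorial] at h
  linarith

lemma exp_neg_sqrt_sq_mul_div {a c m x : ℝ} (hm : 0 < m) (hx : 1 ≤ x) (hc : 0 < c)
    (hac : a = 2 * c) :
    exp (-(√(a * log x / m) ^ 2 * m) / c) = (x ^ 2)⁻¹ := by
  subst hac
  have := log_nonneg hx
  rw [sq_sqrt (by positivity), ← exp_log (by positivity : (0:ℝ) < x ^ 2), ← exp_neg, log_pow]
  congr 1
  field_simp
  push_cast; ring

end Real

namespace MeasureTheory

variable {ι G : Type*} [Fintype ι] [DecidableEq ι] [AddGroup G] [MeasurableSpace G]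
  [MeasurableAdd G] [MeasurableSub₂ G] (ν : Measure G) [IsProbabilityMeasure ν]
  [ν.IsAddRightInvariant]

lemma measurePreserving_sub_eval_pi (j : ι) :
    MeasurePreserving (fun (x : ι → G) (k : {k // k ≠ j}) => x k - x j)
      (Measure.pi fun _ => ν) (Measure.pi fun _ => ν) := by
  have hsplit := measurePreserving_piEquivPiSubtypeProd (fun _ : ι => ν) (· ≠ j)
  -- conditionally on `x j`, translating the other coordinates by `- x j` preserves `ν`
  have hskew := (MeasurePreserving.id (Measure.pi fun _ : {k // ¬k ≠ j} => ν)).skew_product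
    (μc := Measure.pi fun _ : {k // k ≠ j} => ν)
    (g := fun (a : {k // ¬k ≠ j} → G) (y : {k // k ≠ j} → G) k => y k - a ⟨j, not_not.2 rfl⟩)
    (by fun_prop) <| ae_of_all _ fun a => (measurePreserving_pi _ _ fun _ =>
      measurePreserving_sub_right ν (a ⟨j, not_not.2 rfl⟩)).map_eq
  exact measurePreserving_snd.comp (hskew.comp (Measure.measurePreserving_swap.comp hsplit))

variable {Ω : Type*} {mΩ : MeasurableSpace Ω} {μ : Measure Ω}

lemma measureReal_compl_setOf_le_and_le_le [IsFiniteMeasure μ] {f : Ω → ℝ} {a b : ℝ} :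
    μ.real {ω | a ≤ f ω ∧ f ω ≤ b}ᶜ ≤ μ.real {ω | f ω < a} + μ.real {ω | b < f ω} :=
  (measureReal_mono fun ω hω => by
    rwa [Set.mem_compl_iff, Set.mem_ofPred_eq, not_and_or, not_le, not_le] at hω).trans
    (measureReal_union_le _ _)

lemma one_sub_le_measure_iInter_of_measureReal_compl_le [IsProbabilityMeasure μ] {ι : Type*}
    [Fintype ι] {s : ι → Set Ω} {δ : ℝ} (h : ∀ i, μ.real (s i)ᶜ ≤ δ) :
    1 - ENNReal.ofReal (Fintype.card ι * δ) ≤ μ (⋂ i, s i) := by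
  rw [tsub_le_iff_right]
  calc 1 = μ ((⋂ i, s i) ∪ (⋂ i, s i)ᶜ) := by rw [Set.union_compl_self, measure_univ]
    _ ≤ μ (⋂ i, s i) + μ (⋂ i, s i)ᶜ := measure_union_le _ _
    _ ≤ μ (⋂ i, s i) + ENNReal.ofReal (Fintype.card ι * δ) := by
        gcongr
        rw [← ofReal_measureReal, Set.compl_iInter]
        refine ENNReal.ofReal_le_ofReal ((measureReal_iUnion_fintype_le _).trans
          ((Finset.sum_le_sum fun i _ => h i).trans_eq ?_))
        rw [Finset.sum_const, Finset.card_univ, nsmul_eq_mul]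

end MeasureTheory

namespace ProbabilityTheory

open Real

variable {Ω ι : Type*} {mΩ : MeasurableSpace Ω} {μ : Measure Ω} [IsProbabilityMeasure μ]

lemma mgf_le_exp_integral_mul {X : Ω → ℝ} (hX : Measurable X)
    (h01 : ∀ ω, X ω ∈ Set.Icc (0 : ℝ) 1) (t : ℝ) :
    mgf X μ t ≤ exp (μ[X] * (exp t - 1)) := by
  have hint : Integrable X μ := .of_mem_Icc 0 1 hX.aemeasurable (ae_of_all _ h01)
  have hchord : ∀ ω, exp (t * X ω) ≤ 1 + X ω * (exp t - 1) := fun ω => by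
    have := convexOn_exp.2 (Set.mem_univ 0) (Set.mem_univ t) (sub_nonneg.2 (h01 ω).2) (h01 ω).1
      (sub_add_cancel 1 (X ω))
    simp only [smul_eq_mul, mul_zero, zero_add, exp_zero] at this
    rw [mul_comm t]; linarith
  calc mgf X μ t ≤ ∫ ω, (1 + X ω * (exp t - 1)) ∂μ :=
        integral_mono (integrable_exp_mul_of_mem_Icc hX.aemeasurable (ae_of_all _ h01))
          ((integrable_const 1).add (hint.mul_const _)) hchord
    _ = 1 + μ[X] * (exp t - 1) := by
        rw [integral_add (integrable_const 1) (hint.mul_const _), integral_mul_const]; simp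
    _ ≤ exp (μ[X] * (exp t - 1)) := by linarith [add_one_le_exp (μ[X] * (exp t - 1))]

section Chernoff

variable [Fintype ι] {X : ι → Ω → ℝ}

lemma iIndepFun.mgf_sum_le_exp (hindep : iIndepFun X μ) (hmeas : ∀ i, Measurable (X i))
    (h01 : ∀ i ω, X i ω ∈ Set.Icc (0 : ℝ) 1) (t : ℝ) :
    mgf (∑ i, X i) μ t ≤ exp ((∑ i, μ[X i]) * (exp t - 1)) := by
  rw [hindep.mgf_sum hmeas, Finset.sum_mul, exp_sum]
  exact Finset.prod_le_prod (fun i _ => mgf_nonneg)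
    fun i _ => mgf_le_exp_integral_mul (hmeas i) (h01 i) t

lemma iIndepFun.integrable_exp_mul_sum_of_mem_Icc (hindep : iIndepFun X μ)
    (hmeas : ∀ i, Measurable (X i)) (h01 : ∀ i ω, X i ω ∈ Set.Icc (0 : ℝ) 1) (t : ℝ) :
    Integrable (fun ω => exp (t * (∑ i, X i) ω)) μ :=
  hindep.integrable_exp_mul_sum hmeas fun i _ =>
    integrable_exp_mul_of_mem_Icc (hmeas i).aemeasurable (ae_of_all _ (h01 i))

lemma iIndepFun.measureReal_sum_lt_le (hindep : iIndepFun X μ)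
    (hmeas : ∀ i, Measurable (X i)) (h01 : ∀ i ω, X i ω ∈ Set.Icc (0 : ℝ) 1)
    {ε : ℝ} (hε0 : 0 ≤ ε) (hε1 : ε ≤ 1) :
    μ.real {ω | ∑ i, X i ω < (1 - ε) * ∑ i, μ[X i]} ≤ exp (-(ε ^ 2 * ∑ i, μ[X i]) / 2) := by
  set m := ∑ i, μ[X i]
  have hm : 0 ≤ m := Finset.sum_nonneg fun i _ => integral_nonneg fun ω => (h01 i ω).1
  rcases hε1.eq_or_lt with rfl | hε1
  · have : {ω | ∑ i, X i ω < (1 - 1) * m} = ∅ :=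
      Set.eq_empty_of_forall_notMem fun ω hω => (Finset.sum_nonneg fun i _ => (h01 i ω).1).not_gt
        (by simpa using hω)
    rw [this, measureReal_empty]; positivity
  have hexp : exp (log (1 - ε)) = 1 - ε := exp_log (by linarith)
  calc μ.real {ω | ∑ i, X i ω < (1 - ε) * m}
      ≤ μ.real {ω | (∑ i, X i) ω ≤ (1 - ε) * m} :=
        measureReal_mono fun ω hω => by simpa using le_of_lt hω
    _ ≤ exp (-log (1 - ε) * ((1 - ε) * m)) * mgf (∑ i, X i) μ (log (1 - ε)) :=
        measure_le_le_exp_mul_mgf _ (log_nonpos (by linarith) (by linarith))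
          (hindep.integrable_exp_mul_sum_of_mem_Icc hmeas h01 _)
    _ ≤ exp (-log (1 - ε) * ((1 - ε) * m)) * exp (m * (exp (log (1 - ε)) - 1)) := by
        gcongr; exact hindep.mgf_sum_le_exp hmeas h01 _
    _ = exp (-(m * ((1 - ε) * log (1 - ε) + ε))) := by rw [← exp_add, hexp]; ring_nf
    _ ≤ exp (-(ε ^ 2 * m) / 2) := by
        gcongr
        nlinarith [sq_div_two_le_one_sub_mul_log_one_sub_add hε0 hε1]

lemma iIndepFun.measureReal_lt_sum_le (hindep : iIndepFun X μ)
    (hmeas : ∀ i, Measurable (X i)) (h01 : ∀ i ω, X i ω ∈ Set.Icc (0 : ℝ) 1)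
    {ε : ℝ} (hε0 : 0 ≤ ε) (hε1 : ε ≤ 1) :
    μ.real {ω | (1 + ε) * ∑ i, μ[X i] < ∑ i, X i ω} ≤ exp (-(ε ^ 2 * ∑ i, μ[X i]) / 3) := by
  set m := ∑ i, μ[X i]
  have hm : 0 ≤ m := Finset.sum_nonneg fun i _ => integral_nonneg fun ω => (h01 i ω).1
  -- `t = 2ε/3` minimises `-tε + 3t²/4`, the bound obtained from `exp t ≤ 1 + t + 3t²/4`
  set t := 2 * ε / 3 with ht_def
  have ht : 0 ≤ t := by positivity
  calc μ.real {ω | (1 + ε) * m < ∑ i, X i ω}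
      ≤ μ.real {ω | (1 + ε) * m ≤ (∑ i, X i) ω} :=
        measureReal_mono fun ω hω => by simpa using le_of_lt hω
    _ ≤ exp (-t * ((1 + ε) * m)) * mgf (∑ i, X i) μ t :=
        measure_ge_le_exp_mul_mgf _ ht (hindep.integrable_exp_mul_sum_of_mem_Icc hmeas h01 t)
    _ ≤ exp (-t * ((1 + ε) * m)) * exp (m * (exp t - 1)) := by
        gcongr; exact hindep.mgf_sum_le_exp hmeas h01 t
    _ = exp (-t * ((1 + ε) * m) + m * (exp t - 1)) := (exp_add _ _).symm
    _ ≤ exp (-(ε ^ 2 * m) / 3) := by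
        gcongr
        have h := mul_le_mul_of_nonneg_left (exp_le_one_add_add_sq ht (by linarith)) hm
        rw [ht_def] at h ⊢
        nlinarith [h]

end Chernoff

variable [Fintype ι]

lemma iIndepFun_of_map_eq_pi {β : Type*} [MeasurableSpace β] {Y : ι → Ω → β}
    (hY : ∀ i, Measurable (Y i)) {ν : ι → Measure β} [∀ i, IsProbabilityMeasure (ν i)]
    (h : μ.map (fun ω i => Y i ω) = Measure.pi ν) : iIndepFun Y μ := by
  rw [iIndepFun_iff_map_fun_eq_pi_map fun i => (hY i).aemeasurable, h]
  congr with i : 1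
  rw [← (measurePreserving_eval ν i).map_eq, ← h,
    Measure.map_map (measurable_pi_apply i) (measurable_pi_lambda _ hY)]
  rfl

lemma iIndepFun.prodMk_of_indepFun {β γ : Type*} [MeasurableSpace β] [MeasurableSpace γ]
    {f : ι → Ω → β} {g : ι → Ω → γ} (hf : iIndepFun f μ) (hg : iIndepFun g μ)
    (hfm : ∀ i, Measurable (f i)) (hgm : ∀ i, Measurable (g i))
    (hfg : IndepFun (fun ω i => f i ω) (fun ω i => g i ω) μ) :
    iIndepFun (fun i ω => (f i ω, g i ω)) μ := by
  have hF : Measurable fun ω i => f i ω := measurable_pi_lambda _ hfm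
  have hG : Measurable fun ω i => g i ω := measurable_pi_lambda _ hgm
  rw [iIndepFun_iff_map_fun_eq_pi_map fun i => ((hfm i).prodMk (hgm i)).aemeasurable]
  have hpair : ∀ i, μ.map (fun ω => (f i ω, g i ω)) = (μ.map (f i)).prod (μ.map (g i)) :=
    fun i => (hfg.comp (measurable_pi_apply i) (measurable_pi_apply i)).map_prod_eq_prod_map_map
      (hfm i).aemeasurable (hgm i).aemeasurable
  simp_rw [hpair]
  calc μ.map (fun ω i => (f i ω, g i ω))
      = (μ.map fun ω => ((fun i => f i ω), fun i => g i ω)).map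
          (MeasurableEquiv.arrowProdEquivProdArrow β γ ι).symm := by
        rw [Measure.map_map (MeasurableEquiv.measurable _) (hF.prodMk hG)]; rfl
    _ = ((Measure.pi fun i => μ.map (f i)).prod (Measure.pi fun i => μ.map (g i))).map
          (MeasurableEquiv.arrowProdEquivProdArrow β γ ι).symm := by
        rw [hfg.map_prod_eq_prod_map_map hF.aemeasurable hG.aemeasurable,
          hf.map_fun_eq_pi_map fun i => (hfm i).aemeasurable,
          hg.map_fun_eq_pi_map fun i => (hgm i).aemeasurable]
    _ = Measure.pi fun i => (μ.map (f i)).prod (μ.map (g i)) :=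
        (measurePreserving_arrowProdEquivProdArrow β γ ι _ _).symm.map_eq

lemma iIndepFun_prodMk_sub_eval [DecidableEq ι] {G β : Type*} [AddGroup G] [MeasurableSpace G]
    [MeasurableAdd G] [MeasurableSub₂ G] {ν : Measure G} [IsProbabilityMeasure ν]
    [ν.IsAddRightInvariant] [MeasurableSpace β] {P : ι → Ω → β} {X : ι → Ω → G}
    (hPm : ∀ k, Measurable (P k)) (hXm : ∀ k, Measurable (X k))
    (hP : iIndepFun P μ) (hX : iIndepFun X μ) (hXν : ∀ k, μ.map (X k) = ν)
    (hPX : IndepFun (fun ω k => P k ω) (fun ω k => X k ω) μ) (j : ι) :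
    iIndepFun (fun (k : {k // k ≠ j}) ω => (P k ω, X k ω - X j ω)) μ := by
  have hXm' : Measurable fun ω k => X k ω := measurable_pi_lambda _ hXm
  refine (hP.precomp Subtype.val_injective).prodMk_of_indepFun ?_ (fun k => hPm k)
    (fun k => (hXm k).sub (hXm j)) ?_
  · refine iIndepFun_of_map_eq_pi (fun k => (hXm k).sub (hXm j)) (ν := fun _ => ν) ?_
    rw [← (measurePreserving_sub_eval_pi ν j).map_eq,
      ← funext hXν, ← hX.map_fun_eq_pi_map fun k => (hXm k).aemeasurable,
      Measure.map_map (measurePreserving_sub_eval_pi ν j).measurable hXm']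
    rfl
  · exact hPX.comp (φ := fun p (k : {k // k ≠ j}) => p k.1)
      (ψ := fun x (k : {k // k ≠ j}) => x k.1 - x j) (by fun_prop) (by fun_prop)

end ProbabilityTheory

section Interference

variable {Ω ι E : Type*} [Fintype ι] [DecidableEq ι]

def interference [Dist E] (P : ι → Ω → ℝ) (L : ℝ → ℝ) (X : ι → Ω → E) (j : ι) (ω : Ω) : ℝ :=
  ∑ k ∈ Finset.univ.erase j, P k ω * L (dist (X k ω) (X j ω))

lemma interference_eq_sum_subtype [SeminormedAddCommGroup E] (P : ι → Ω → ℝ) (L : ℝ → ℝ)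
    (X : ι → Ω → E) (j : ι) (ω : Ω) :
    interference P L X j ω = ∑ k : {k // k ≠ j}, P k ω * L ‖X k ω - X j ω‖ := by
  simp only [interference, dist_eq_norm_sub]
  exact Finset.sum_subtype _ (p := (· ≠ j)) (fun k => by simp) _

open Real in
lemma measureReal_interference_tails_le {mΩ : MeasurableSpace Ω} {μ : Measure Ω}
    [IsProbabilityMeasure μ] [NormedAddCommGroup E] [MeasurableSpace E] [BorelSpace E]
    [SecondCountableTopology E] {ν : Measure E} [IsProbabilityMeasure ν] [ν.IsAddRightInvariant]
    {X : ι → Ω → E} (hXm : ∀ k, Measurable (X k)) (hX : iIndepFun X μ)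
    (hXν : ∀ k, μ.map (X k) = ν) {L : ℝ → ℝ} (hLm : Measurable L)
    (hL01 : ∀ x, L x ∈ Set.Icc (0 : ℝ) 1) {P : ι → Ω → ℝ} (hPm : ∀ k, Measurable (P k))
    (hP01 : ∀ k ω, P k ω ∈ Set.Icc (0 : ℝ) 1) (hP : iIndepFun P μ)
    (hPX : IndepFun (fun ω k => P k ω) (fun ω k => X k ω) μ) {EP EL m : ℝ}
    (hEP : ∀ k, μ[P k] = EP) (j : ι) (hEL : ∀ k, k ≠ j → ∫ ω, L (dist (X k ω) (X j ω)) ∂μ = EL)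
    (hm : ((Fintype.card ι : ℝ) - 1) * EP * EL = m)
    {ε ε' : ℝ} (hε0 : 0 ≤ ε) (hε1 : ε ≤ 1) (hε'0 : 0 ≤ ε') (hε'1 : ε' ≤ 1) :
    μ.real {ω | interference P L X j ω < (1 - ε) * m} ≤ exp (-(ε ^ 2 * m) / 2) ∧
    μ.real {ω | (1 + ε') * m < interference P L X j ω} ≤ exp (-(ε' ^ 2 * m) / 3) := by
  set Z : {k // k ≠ j} → Ω → ℝ := fun k ω => P k ω * L ‖X k ω - X j ω‖
  have hZm : ∀ k, Measurable (Z k) := fun k => by fun_prop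
  have hZ01 : ∀ k ω, Z k ω ∈ Set.Icc (0 : ℝ) 1 := fun k ω =>
    ⟨mul_nonneg (hP01 k ω).1 (hL01 _).1, mul_le_one₀ (hP01 k ω).2 (hL01 _).1 (hL01 _).2⟩
  have hZ : iIndepFun Z μ :=
    (iIndepFun_prodMk_sub_eval hPm hXm hP hX hXν hPX j).comp (fun _ q => q.1 * L ‖q.2‖)
      fun _ => by fun_prop
  have hZmean : ∀ k, μ[Z k] = EP * EL := fun k => by
    have hind : IndepFun (P k) (fun ω => L ‖X k ω - X j ω‖) μ :=
      hPX.comp (measurable_pi_apply k.1)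
        (by fun_prop : Measurable fun x : ι → E => L ‖x k - x j‖)
    rw [show Z k = P k * fun ω => L ‖X k ω - X j ω‖ from rfl,
      hind.integral_mul_eq_mul_integral (hPm k).aestronglyMeasurable
        (hLm.comp ((hXm k).sub (hXm j)).norm).aestronglyMeasurable, hEP, ← hEL k k.2]
    simp only [dist_eq_norm_sub]
  have hmean : ∑ k, μ[Z k] = m := by
    rw [Finset.sum_congr rfl fun k _ => hZmean k, Finset.sum_const, Finset.card_univ,
      Fintype.card_subtype, Finset.filter_ne', Finset.card_erase_of_mem (Finset.mem_univ j),
      Finset.card_univ, nsmul_eq_mul, ← hm, Nat.cast_sub (Fintype.card_pos_iff.2 ⟨j⟩)]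
    push_cast; ring
  simp only [interference_eq_sum_subtype, ← hmean]
  exact ⟨hZ.measureReal_sum_lt_le hZm hZ01 hε0 hε1, hZ.measureReal_lt_sum_le hZm hZ01 hε'0 hε'1⟩

end Interference

theorem interference_simultaneous_concentration_general
    {Ω : Type*} [MeasureSpace Ω] [IsProbabilityMeasure (ℙ : Measure Ω)]
    (n : ℕ) (hn : 2 ≤ n)
    (X : Fin n → Ω → Torus)
    (hXmeas : ∀ j, Measurable (X j))
    (hXindep : iIndepFun X ℙ)
    (hXunif : ∀ j, Measure.map (X j) ℙ = (volume : Measure Torus))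
    (L : ℝ → ℝ) (hLmeas : Measurable L)
    (hL01 : ∀ x, L x ∈ Set.Icc (0 : ℝ) 1)
    (EL : ℝ) (hELpos : 0 < EL)
    (hEL : ∀ j k : Fin n, j ≠ k → ∫ ω, L (dist (X k ω) (X j ω)) ∂ℙ = EL)
    (P : Fin n → Ω → ℝ) (hPmeas : ∀ k, Measurable (P k))
    (pmin pmax : ℝ) (hpmin : 0 < pmin) (hpmax : pmax ≤ 1)
    (hPrange : ∀ k ω, P k ω ∈ Set.Icc pmin pmax)
    (hPindep : iIndepFun P ℙ)
    (hPXindep : IndepFun (fun ω => fun k => P k ω) (fun ω => fun k => X k ω) ℙ)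
    (EP : ℝ) (hEP : ∀ k, ∫ ω, P k ω ∂ℙ = EP)
    (ε₂ ε₂' : ℝ)
    (hε₂ : ε₂ = Real.sqrt (4 * Real.log n / (((n : ℝ) - 1) * EP * EL)))
    (hε₂' : ε₂' = Real.sqrt (6 * Real.log n / (((n : ℝ) - 1) * EP * EL)))
    (hε₂le : ε₂ ≤ 1) (hε₂'le : ε₂' ≤ 1) :
    1 - 2 / (n : ENNReal)
      ≤ ℙ {ω | ∀ j : Fin n,
            (1 - ε₂) * (((n : ℝ) - 1) * EP * EL)
              ≤ ∑ k ∈ Finset.univ.erase j, P k ω * L (dist (X k ω) (X j ω)) ∧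
            ∑ k ∈ Finset.univ.erase j, P k ω * L (dist (X k ω) (X j ω))
              ≤ (1 + ε₂') * (((n : ℝ) - 1) * EP * EL)} := by
  subst hε₂ hε₂'
  have hn1 : (1 : ℝ) < n := by exact_mod_cast hn
  have hP01 : ∀ k ω, P k ω ∈ Set.Icc (0 : ℝ) 1 := fun k ω =>
    ⟨hpmin.le.trans (hPrange k ω).1, (hPrange k ω).2.trans hpmax⟩
  have hEPpos : 0 < EP := by
    have k : Fin n := ⟨0, by omega⟩
    rw [← hEP k]
    calc 0 < pmin := hpmin
      _ = ∫ _, pmin ∂ℙ := by simp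
      _ ≤ ∫ ω, P k ω ∂ℙ := integral_mono (integrable_const _)
          (.of_mem_Icc pmin pmax (hPmeas k).aemeasurable (ae_of_all _ (hPrange k)))
          fun ω => (hPrange k ω).1
  set m := ((n : ℝ) - 1) * EP * EL
  have hmpos : 0 < m := mul_pos (mul_pos (by linarith) hEPpos) hELpos
  have hbound : (2 / n : ENNReal)
      = ENNReal.ofReal (Fintype.card (Fin n) * (((n : ℝ) ^ 2)⁻¹ + ((n : ℝ) ^ 2)⁻¹)) := by
    rw [Fintype.card_fin, show (n : ℝ) * (((n : ℝ) ^ 2)⁻¹ + ((n : ℝ) ^ 2)⁻¹) = 2 / n by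
      field_simp; ring, ENNReal.ofReal_div_of_pos (by positivity), ENNReal.ofReal_ofNat,
      ENNReal.ofReal_natCast]
  rw [Set.ofPred_forall, hbound]
  refine one_sub_le_measure_iInter_of_measureReal_compl_le fun j => ?_
  obtain ⟨hlow, hhigh⟩ := measureReal_interference_tails_le hXmeas hXindep hXunif hLmeas hL01
    hPmeas hP01 hPindep hPXindep hEP j (fun k hk => hEL j k hk.symm) (m := m)
    (by rw [Fintype.card_fin]) (Real.sqrt_nonneg _) hε₂le (Real.sqrt_nonneg _) hε₂'le
  rw [Real.exp_neg_sqrt_sq_mul_div hmpos hn1.le two_pos (by norm_num)] at hlow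
  rw [Real.exp_neg_sqrt_sq_mul_div hmpos hn1.le three_pos (by norm_num)] at hhigh
  exact measureReal_compl_setOf_le_and_le_le.trans (add_le_add hlow hhigh)

/-- simultaneous concentration of all interference sums `I(j)`. -/
theorem interference_simultaneous_concentration
    {Ω : Type*} [MeasureSpace Ω] [IsProbabilityMeasure (ℙ : Measure Ω)]
    (n : ℕ) (hn : 2 ≤ n)
    (X : Fin n → Ω → Torus)
    (hXmeas : ∀ j, Measurable (X j))
    (hXindep : iIndepFun X ℙ)
    (hXunif : ∀ j, Measure.map (X j) ℙ = (volume : Measure Torus))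
    (L : ℝ → ℝ) (hLmeas : Measurable L)
    (hL01 : ∀ x, L x ∈ Set.Icc (0 : ℝ) 1)
    (EL : ℝ) (hELpos : 0 < EL)
    (hEL : ∀ j k : Fin n, j ≠ k → ∫ ω, L (dist (X k ω) (X j ω)) ∂ℙ = EL)
    (P : Fin n → Ω → ℝ) (hPmeas : ∀ k, Measurable (P k))
    (pmin pmax : ℝ) (hpmin : 0 < pmin) (hpminmax : pmin ≤ pmax) (hpmax : pmax ≤ 1)
    (hPrange : ∀ k ω, P k ω ∈ Set.Icc pmin pmax)
    (hPindep : iIndepFun P ℙ)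
    (hPid : ∀ k k' : Fin n, Measure.map (P k) ℙ = Measure.map (P k') ℙ)
    (hPXindep : IndepFun (fun ω => fun k => P k ω) (fun ω => fun k => X k ω) ℙ)
    (EP : ℝ) (hEP : ∀ k, ∫ ω, P k ω ∂ℙ = EP)
    (ε₂ ε₂' : ℝ)
    (hε₂ : ε₂ = Real.sqrt (4 * Real.log n / (((n : ℝ) - 1) * EP * EL)))
    (hε₂' : ε₂' = Real.sqrt (6 * Real.log n / (((n : ℝ) - 1) * EP * EL)))
    (hε₂le : ε₂ ≤ 1) (hε₂'le : ε₂' ≤ 1) :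
    1 - 2 / (n : ENNReal)
      ≤ ℙ {ω | ∀ j : Fin n,
            (1 - ε₂) * (((n : ℝ) - 1) * EP * EL)
              ≤ ∑ k ∈ Finset.univ.erase j, P k ω * L (dist (X k ω) (X j ω)) ∧
            ∑ k ∈ Finset.univ.erase j, P k ω * L (dist (X k ω) (X j ω))
              ≤ (1 + ε₂') * (((n : ℝ) - 1) * EP * EL)} :=
  interference_simultaneous_concentration_general n hn X hXmeas hXindep hXunif L hLmeas hL01 EL
    hELpos hEL P hPmeas pmin pmax hpmin hpmax hPrange hPindep hPXindep EP hEP ε₂ ε₂' hε₂ hε₂' hε₂le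
    hε₂'le
end

section
/- Let Y₁, …, Yₙ (n > 1) be random variables, not necessarily independent, each taking values in a countable set, and let S = Y₁ + ⋯ + Yₙ be integrable. Suppose for each i there is a constant cᵢ ≥ 0 such that for every tuple (y₁,…,y_{i−1}) and every pair of values y, y′ with Pr(Y₁=y₁,…,Y_{i−1}=y_{i−1}, Y_i=y) > 0 and Pr(Y₁=y₁,…,Y_{i−1}=y_{i−1}, Y_i=y′) > 0, one has |E[S | Y₁=y₁,…,Y_{i−1}=y_{i−1}, Y_i=y] − E[S | Y₁=y₁,…,Y_{i−1}=y_{i−1}, Y_i=y′]| ≤ cᵢ. Then for every λ > 0, Pr( S ≥ E[S] + λ ) ≤ exp( −λ² / (2·Σ_{i=1}^n cᵢ²) ) and Pr( S ≤ E[S] − λ ) ≤ exp( −λ² / (2·Σ_{i=1}^n cᵢ²) ). -/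
/-!
Let `Mᵢ = E[S | Y₁, …, Yᵢ]`, computed atom by atom on the countable partition cut out by the
prefix `(Y₁, …, Yᵢ)`. On each atom of the `i`-th partition, `Mᵢ₊₁` has mean `Mᵢ` and, by the
bounded-difference hypothesis, all its values lie within `cᵢ` of one another, so Hoeffding's
lemma bounds its conditional moment generating function by `exp (cᵢ² t² / 2)`. Multiplying these
bounds from `M₀ = E[S]` to `Mₙ = S` shows that `S - E[S]` is sub-Gaussian with variance proxy
`∑ cᵢ²`, and the Chernoff bound gives both tails.
-/

open MeasureTheory ProbabilityTheory Set Real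
open scoped ENNReal NNReal

theorem Measurable.comp_of_countable_range {α β δ : Type*} [MeasurableSpace α]
    [MeasurableSpace β] [MeasurableSpace δ] [MeasurableSingletonClass δ] {F : α → δ}
    (hF : Measurable F) (hFc : (range F).Countable) (g : δ → β) : Measurable (g ∘ F) :=
  have : Countable (range F) := hFc.to_subtype
  (measurable_of_countable (g ∘ Subtype.val)).comp (hF.subtype_mk (h := mem_range_self))

namespace ProbabilityTheory

namespace HasSubgaussianMGF

variable {Ω : Type*} [MeasurableSpace Ω] {μ : Measure Ω} {X : Ω → ℝ} {c : ℝ≥0}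

lemma lintegral_exp_mul_le (h : HasSubgaussianMGF X c μ) (t : ℝ) :
    ∫⁻ ω, ENNReal.ofReal (exp (t * X ω)) ∂μ ≤ ENNReal.ofReal (exp (c * t ^ 2 / 2)) := by
  rw [← ofReal_integral_eq_lintegral_ofReal (h.integrable_exp_mul t)
    (ae_of_all _ fun ω => (exp_pos _).le)]
  exact ENNReal.ofReal_le_ofReal (h.mgf_le t)

lemma of_lintegral_exp_mul_le (hX : AEMeasurable X μ)
    (h : ∀ t : ℝ, ∫⁻ ω, ENNReal.ofReal (exp (t * X ω)) ∂μ ≤ ENNReal.ofReal (exp (c * t ^ 2 / 2))) :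
    HasSubgaussianMGF X c μ where
  integrable_exp_mul t := by
    have hpos : 0 ≤ᵐ[μ] fun ω => exp (t * X ω) := ae_of_all _ fun ω => (exp_pos _).le
    refine ⟨(measurable_exp.comp_aemeasurable (hX.const_mul t)).aestronglyMeasurable, ?_⟩
    exact (hasFiniteIntegral_iff_ofReal hpos).2 ((h t).trans_lt ENNReal.ofReal_lt_top)
  mgf_le t := by
    rw [mgf, integral_eq_lintegral_of_nonneg_ae (ae_of_all _ fun ω => (exp_pos _).le)
      (measurable_exp.comp_aemeasurable (hX.const_mul t)).aestronglyMeasurable]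
    exact ENNReal.toReal_le_of_le_ofReal (exp_pos _).le (h t)

lemma measure_ge_le_ofReal [IsFiniteMeasure μ] (h : HasSubgaussianMGF X c μ) {ε : ℝ}
    (hε : 0 ≤ ε) : μ {ω | ε ≤ X ω} ≤ ENNReal.ofReal (exp (-ε ^ 2 / (2 * c))) :=
  (ENNReal.le_ofReal_iff_toReal_le (measure_ne_top _ _) (exp_pos _).le).2 (h.measure_ge_le hε)

end HasSubgaussianMGF

section FiberAvg

variable {Ω δ γ : Type*} [MeasurableSpace Ω] {μ : Measure Ω} {F : Ω → δ} {E : Ω → γ}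
  {S : Ω → ℝ}

/-- The elementary conditional expectation `E[S | F = F ω]`; it takes the junk value `0` when
the fiber of `ω` is null. -/
noncomputable def fiberAvg (μ : Measure Ω) (F : Ω → δ) (S : Ω → ℝ) (ω : Ω) : ℝ :=
  (∫ x in F ⁻¹' {F ω}, S x ∂μ) / μ.real (F ⁻¹' {F ω})

def FiberAvgOscillationLE (μ : Measure Ω) (E : Ω → γ) (F : Ω → δ) (S : Ω → ℝ) (c : ℝ) : Prop :=
  ∀ ω ω', E ω = E ω' → μ (F ⁻¹' {F ω}) ≠ 0 → μ (F ⁻¹' {F ω'}) ≠ 0 →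
    |fiberAvg μ F S ω - fiberAvg μ F S ω'| ≤ c

lemma fiberAvg_eq_of_mem {d : δ} {ω : Ω} (hω : ω ∈ F ⁻¹' {d}) :
    fiberAvg μ F S ω = (∫ x in F ⁻¹' {d}, S x ∂μ) / μ.real (F ⁻¹' {d}) := by
  rw [fiberAvg, mem_singleton_iff.1 (mem_preimage.1 hω)]

lemma fiberAvg_of_forall_eq [IsProbabilityMeasure μ] (hF : ∀ ω ω', F ω = F ω') (ω : Ω) :
    fiberAvg μ F S ω = ∫ x, S x ∂μ := by
  have huniv : F ⁻¹' {F ω} = univ := eq_univ_of_forall fun ω' => hF ω' ω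
  rw [fiberAvg, huniv, Measure.restrict_univ, probReal_univ, div_one]

lemma ae_measure_fiber_ne_zero (hFc : (range F).Countable) :
    ∀ᵐ ω ∂μ, μ (F ⁻¹' {F ω}) ≠ 0 := by
  have hnull : μ (⋃ d ∈ {d ∈ range F | μ (F ⁻¹' {d}) = 0}, F ⁻¹' {d}) = 0 :=
    (measure_biUnion_null_iff (hFc.mono (sep_subset _ _))).2 fun d hd => hd.2
  filter_upwards [measure_eq_zero_iff_ae_notMem.1 hnull] with ω hω h0
  exact hω (mem_biUnion ⟨mem_range_self ω, h0⟩ rfl)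

variable [MeasurableSpace δ] [MeasurableSingletonClass δ]

lemma measurable_fiberAvg (hF : Measurable F) (hFc : (range F).Countable) :
    Measurable (fiberAvg μ F S) :=
  hF.comp_of_countable_range hFc fun d => (∫ x in F ⁻¹' {d}, S x ∂μ) / μ.real (F ⁻¹' {d})

lemma lintegral_eq_tsum_setLIntegral_fiber (hF : Measurable F) (hFc : (range F).Countable)
    (f : Ω → ℝ≥0∞) : ∫⁻ ω, f ω ∂μ = ∑' d : range F, ∫⁻ ω in F ⁻¹' {(d : δ)}, f ω ∂μ := by
  rw [← setLIntegral_univ, ← preimage_range F, ← biUnion_preimage_singleton,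
    lintegral_biUnion hFc (fun d _ => hF (measurableSet_singleton d)) (pairwiseDisjoint_fiber F _)]

variable [IsFiniteMeasure μ]

lemma setIntegral_fiberAvg_fiber (hF : Measurable F) (d : δ) :
    ∫ ω in F ⁻¹' {d}, fiberAvg μ F S ω ∂μ = ∫ ω in F ⁻¹' {d}, S ω ∂μ := by
  rw [setIntegral_congr_fun (hF (measurableSet_singleton d)) fun ω hω => fiberAvg_eq_of_mem hω,
    setIntegral_const, smul_eq_mul]
  by_cases h0 : μ.real (F ⁻¹' {d}) = 0
  · rw [h0, zero_mul, Measure.restrict_eq_zero.2 ((measureReal_eq_zero_iff).1 h0),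
      integral_zero_measure]
  · exact mul_div_cancel₀ _ h0

lemma setIntegral_fiberAvg_preimage (hF : Measurable F) (hFc : (range F).Countable) (T : Set δ)
    (hS : IntegrableOn S (F ⁻¹' T) μ) (hA : IntegrableOn (fiberAvg μ F S) (F ⁻¹' T) μ) :
    ∫ ω in F ⁻¹' T, fiberAvg μ F S ω ∂μ = ∫ ω in F ⁻¹' T, S ω ∂μ := by
  have : Countable ↥(T ∩ range F) := (hFc.mono inter_subset_right).to_subtype
  have hT : F ⁻¹' T = ⋃ d : ↥(T ∩ range F), F ⁻¹' {(d : δ)} := by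
    rw [← preimage_inter_range, ← biUnion_preimage_singleton, biUnion_eq_iUnion]
  have hmeas : ∀ d : ↥(T ∩ range F), MeasurableSet (F ⁻¹' {(d : δ)}) :=
    fun d => hF (measurableSet_singleton _)
  have hdisj : Pairwise (Function.onFun Disjoint fun d : ↥(T ∩ range F) => F ⁻¹' {(d : δ)}) :=
    fun d d' hne => Disjoint.preimage F (disjoint_singleton.2 (Subtype.coe_ne_coe.2 hne))
  rw [hT] at hS hA ⊢
  rw [integral_iUnion hmeas hdisj hA, integral_iUnion hmeas hdisj hS]
  exact tsum_congr fun d => setIntegral_fiberAvg_fiber hF d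

lemma fiberAvg_ae_eq_self (hF : Measurable F) (hFc : (range F).Countable)
    (hSF : ∀ ω ω', F ω' = F ω → S ω' = S ω) : fiberAvg μ F S =ᵐ[μ] S := by
  filter_upwards [ae_measure_fiber_ne_zero hFc] with ω hω
  rw [fiberAvg, setIntegral_congr_fun (hF (measurableSet_singleton _)) fun ω' hω' => hSF ω ω' hω',
    setIntegral_const, smul_eq_mul, mul_div_cancel_left₀ _ ((measureReal_ne_zero_iff).2 hω)]

lemma setIntegral_fiberAvg_of_refines (hF : Measurable F) (hFc : (range F).Countable)
    (hEF : ∀ ω ω', F ω = F ω' → E ω = E ω') (b : γ) (hS : IntegrableOn S (E ⁻¹' {b}) μ)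
    (hA : IntegrableOn (fiberAvg μ F S) (E ⁻¹' {b}) μ) :
    ∫ ω in E ⁻¹' {b}, fiberAvg μ F S ω ∂μ = ∫ ω in E ⁻¹' {b}, S ω ∂μ := by
  have hsat : F ⁻¹' (F '' (E ⁻¹' {b})) = E ⁻¹' {b} := by
    refine (subset_preimage_image F _).antisymm' ?_
    rintro ω ⟨ω', hω'b, hF'⟩
    exact (hEF ω ω' hF'.symm).trans hω'b
  rw [← hsat] at hS hA ⊢
  exact setIntegral_fiberAvg_preimage hF hFc _ hS hA

variable [MeasurableSpace γ] [MeasurableSingletonClass γ]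

lemma hasSubgaussianMGF_cond_fiberAvg_sub (hE : Measurable E) (hF : Measurable F)
    (hFc : (range F).Countable) (hEF : ∀ ω ω', F ω = F ω' → E ω = E ω') (hS : Integrable S μ)
    {c : ℝ≥0} (hosc : FiberAvgOscillationLE μ E F S c) {b : γ} (hb : μ (E ⁻¹' {b}) ≠ 0) :
    HasSubgaussianMGF
      (fun ω => fiberAvg μ F S ω - (∫ x in E ⁻¹' {b}, S x ∂μ) / μ.real (E ⁻¹' {b}))
      (c ^ 2) μ[|E ⁻¹' {b}] := by
  set B := E ⁻¹' {b}
  set A := fiberAvg μ F S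
  have hB : MeasurableSet B := hE (measurableSet_singleton b)
  have hA : Measurable A := measurable_fiberAvg hF hFc
  obtain ⟨ω₀, hω₀B, hω₀⟩ : ∃ ω₀ ∈ B, μ (F ⁻¹' {F ω₀}) ≠ 0 := by
    have : (ae (μ.restrict B)).NeBot := ae_neBot.2 (by rwa [Ne, Measure.restrict_eq_zero])
    exact ((ae_restrict_mem hB).and (ae_restrict_of_ae (ae_measure_fiber_ne_zero hFc))).exists
  have hbound : ∀ᵐ ω ∂μ, ω ∈ B → A ω ∈ Icc (A ω₀ - c) (A ω₀ + c) := by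
    filter_upwards [ae_measure_fiber_ne_zero hFc] with ω hω hωB
    have := abs_le.1 (hosc ω ω₀ (hωB.trans hω₀B.symm) hω hω₀)
    constructor <;> linarith [this.1, this.2]
  have htower : ∫ x in B, A x ∂μ = ∫ x in B, S x ∂μ :=
    setIntegral_fiberAvg_of_refines hF hFc hEF b hS.integrableOn
      (Integrable.of_mem_Icc _ _ hA.aemeasurable ((ae_restrict_iff' hB).2 hbound))
  have hmean : ∫ ω, A ω ∂μ[|B] = (∫ x in B, S x ∂μ) / μ.real B := by
    rw [ProbabilityTheory.cond, integral_smul_measure, ENNReal.toReal_inv, smul_eq_mul,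
      inv_mul_eq_div, htower]
    rfl
  have hbound_cond : ∀ᵐ ω ∂μ[|B], A ω ∈ Icc (A ω₀ - c) (A ω₀ + c) := by
    filter_upwards [cond_absolutelyContinuous.ae_le hbound, ae_cond_mem hB] with ω h hω
    exact h hω
  have : IsProbabilityMeasure μ[|B] := cond_isProbabilityMeasure hb
  have hsub := hasSubgaussianMGF_of_mem_Icc hA.aemeasurable hbound_cond
  rw [hmean] at hsub
  convert hsub using 2
  -- Hoeffding's constant `(‖(a + c) - (a - c)‖₊ / 2) ^ 2` is `c ^ 2`.
  ext
  simp [abs_of_nonneg]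

lemma setLIntegral_exp_fiberAvg_le (hE : Measurable E) (hF : Measurable F)
    (hFc : (range F).Countable) (hEF : ∀ ω ω', F ω = F ω' → E ω = E ω') (hS : Integrable S μ)
    {c : ℝ≥0} (hosc : FiberAvgOscillationLE μ E F S c) (b : γ) (t : ℝ) :
    ∫⁻ ω in E ⁻¹' {b}, ENNReal.ofReal (exp (t * fiberAvg μ F S ω)) ∂μ
      ≤ ENNReal.ofReal (exp (c ^ 2 * t ^ 2 / 2)) *
        ∫⁻ ω in E ⁻¹' {b}, ENNReal.ofReal (exp (t * fiberAvg μ E S ω)) ∂μ := by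
  set B := E ⁻¹' {b}
  have hB : MeasurableSet B := hE (measurableSet_singleton b)
  by_cases hb : μ B = 0
  · simp [Measure.restrict_eq_zero.2 hb]
  set v := (∫ x in B, S x ∂μ) / μ.real B
  have hRHS : ∫⁻ ω in B, ENNReal.ofReal (exp (t * fiberAvg μ E S ω)) ∂μ
      = ENNReal.ofReal (exp (t * v)) * μ B := by
    rw [setLIntegral_congr_fun hB fun ω hω => by rw [fiberAvg_eq_of_mem hω], setLIntegral_const]
  have hsplit : ∀ ω, ENNReal.ofReal (exp (t * fiberAvg μ F S ω))
      = ENNReal.ofReal (exp (t * v)) * ENNReal.ofReal (exp (t * (fiberAvg μ F S ω - v))) := by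
    intro ω
    rw [← ENNReal.ofReal_mul (exp_pos _).le, ← exp_add]
    ring_nf
  have hcond :=
    (hasSubgaussianMGF_cond_fiberAvg_sub hE hF hFc hEF hS hosc hb).lintegral_exp_mul_le t
  push_cast at hcond
  calc ∫⁻ ω in B, ENNReal.ofReal (exp (t * fiberAvg μ F S ω)) ∂μ
      = μ B * ∫⁻ ω, ENNReal.ofReal (exp (t * fiberAvg μ F S ω)) ∂μ[|B] := by
        rw [ProbabilityTheory.cond, lintegral_smul_measure, smul_eq_mul, ← mul_assoc,
          ENNReal.mul_inv_cancel hb (measure_ne_top _ _), one_mul]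
    _ = μ B * (ENNReal.ofReal (exp (t * v)) *
          ∫⁻ ω, ENNReal.ofReal (exp (t * (fiberAvg μ F S ω - v))) ∂μ[|B]) := by
        simp_rw [hsplit]
        rw [lintegral_const_mul' _ _ ENNReal.ofReal_ne_top]
    _ ≤ μ B * (ENNReal.ofReal (exp (t * v)) * ENNReal.ofReal (exp (c ^ 2 * t ^ 2 / 2))) := by
        gcongr
    _ = _ := by rw [hRHS]; ring

lemma lintegral_exp_fiberAvg_le (hE : Measurable E) (hEc : (range E).Countable)
    (hF : Measurable F) (hFc : (range F).Countable) (hEF : ∀ ω ω', F ω = F ω' → E ω = E ω')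
    (hS : Integrable S μ) {c : ℝ≥0} (hosc : FiberAvgOscillationLE μ E F S c) (t : ℝ) :
    ∫⁻ ω, ENNReal.ofReal (exp (t * fiberAvg μ F S ω)) ∂μ
      ≤ ENNReal.ofReal (exp (c ^ 2 * t ^ 2 / 2)) *
        ∫⁻ ω, ENNReal.ofReal (exp (t * fiberAvg μ E S ω)) ∂μ := by
  rw [lintegral_eq_tsum_setLIntegral_fiber hE hEc, lintegral_eq_tsum_setLIntegral_fiber hE hEc,
    ← ENNReal.tsum_mul_left]
  exact ENNReal.tsum_le_tsum fun b => setLIntegral_exp_fiberAvg_le hE hF hFc hEF hS hosc b t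

end FiberAvg

section Refining

variable {Ω δ : Type*} [MeasurableSpace Ω] {μ : Measure Ω} [MeasurableSpace δ]
  [MeasurableSingletonClass δ] {F : ℕ → Ω → δ} {S : Ω → ℝ} {c : ℕ → ℝ≥0} {k : ℕ}

lemma lintegral_exp_fiberAvg_le_of_refining [IsFiniteMeasure μ] (hF : ∀ i, Measurable (F i))
    (hFc : ∀ i, (range (F i)).Countable)
    (hrefine : ∀ i ω ω', F (i + 1) ω = F (i + 1) ω' → F i ω = F i ω') (hS : Integrable S μ)
    (hosc : ∀ i < k, FiberAvgOscillationLE μ (F i) (F (i + 1)) S (c i)) (t : ℝ) :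
    ∫⁻ ω, ENNReal.ofReal (exp (t * fiberAvg μ (F k) S ω)) ∂μ
      ≤ ENNReal.ofReal (exp ((∑ i ∈ Finset.range k, (c i : ℝ) ^ 2) * t ^ 2 / 2)) *
        ∫⁻ ω, ENNReal.ofReal (exp (t * fiberAvg μ (F 0) S ω)) ∂μ := by
  induction k with
  | zero => simp
  | succ k ih =>
    calc ∫⁻ ω, ENNReal.ofReal (exp (t * fiberAvg μ (F (k + 1)) S ω)) ∂μ
        ≤ ENNReal.ofReal (exp ((c k : ℝ) ^ 2 * t ^ 2 / 2)) *
            ∫⁻ ω, ENNReal.ofReal (exp (t * fiberAvg μ (F k) S ω)) ∂μ :=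
          lintegral_exp_fiberAvg_le (hF k) (hFc k) (hF (k + 1)) (hFc (k + 1)) (hrefine k) hS
            (hosc k k.lt_succ_self) t
      _ ≤ ENNReal.ofReal (exp ((c k : ℝ) ^ 2 * t ^ 2 / 2)) *
            (ENNReal.ofReal (exp ((∑ i ∈ Finset.range k, (c i : ℝ) ^ 2) * t ^ 2 / 2)) *
              ∫⁻ ω, ENNReal.ofReal (exp (t * fiberAvg μ (F 0) S ω)) ∂μ) := by
          gcongr
          exact ih fun i hi => hosc i (hi.trans k.lt_succ_self)
      _ = _ := by
          rw [← mul_assoc, ← ENNReal.ofReal_mul (exp_pos _).le, ← exp_add, Finset.sum_range_succ]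
          ring_nf

/-- Azuma's inequality for the martingale of fiber averages along a refining chain of countable
partitions. -/
theorem hasSubgaussianMGF_sub_integral_of_refining [IsProbabilityMeasure μ]
    (hF : ∀ i, Measurable (F i)) (hFc : ∀ i, (range (F i)).Countable)
    (hrefine : ∀ i ω ω', F (i + 1) ω = F (i + 1) ω' → F i ω = F i ω')
    (hF₀ : ∀ ω ω', F 0 ω = F 0 ω') (hSF : ∀ ω ω', F k ω' = F k ω → S ω' = S ω)
    (hS : Integrable S μ) (hosc : ∀ i < k, FiberAvgOscillationLE μ (F i) (F (i + 1)) S (c i)) :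
    HasSubgaussianMGF (fun ω => S ω - ∫ x, S x ∂μ) (∑ i ∈ Finset.range k, c i ^ 2) μ := by
  set m := ∫ x, S x ∂μ
  refine .of_lintegral_exp_mul_le (hS.aemeasurable.sub_const m) fun t => ?_
  have hshift : ∀ ω, ENNReal.ofReal (exp (t * (S ω - m)))
      = ENNReal.ofReal (exp (t * S ω)) * ENNReal.ofReal (exp (-(t * m))) := by
    intro ω
    rw [← ENNReal.ofReal_mul (exp_pos _).le, ← exp_add]
    ring_nf
  have hS_avg : ∫⁻ ω, ENNReal.ofReal (exp (t * S ω)) ∂μ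
      = ∫⁻ ω, ENNReal.ofReal (exp (t * fiberAvg μ (F k) S ω)) ∂μ := by
    refine lintegral_congr_ae ?_
    filter_upwards [fiberAvg_ae_eq_self (hF k) (hFc k) hSF] with ω hω
    rw [hω]
  have hchain := lintegral_exp_fiberAvg_le_of_refining hF hFc hrefine hS hosc t
  simp only [fiberAvg_of_forall_eq hF₀, lintegral_const, measure_univ, mul_one] at hchain
  simp_rw [hshift]
  rw [lintegral_mul_const' _ _ ENNReal.ofReal_ne_top, hS_avg]
  calc _ ≤ ENNReal.ofReal (exp ((∑ i ∈ Finset.range k, (c i : ℝ) ^ 2) * t ^ 2 / 2)) *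
          ENNReal.ofReal (exp (t * m)) * ENNReal.ofReal (exp (-(t * m))) := by gcongr
    _ = _ := by
      rw [mul_assoc, ← ENNReal.ofReal_mul (exp_pos _).le, ← exp_add, add_neg_cancel, exp_zero,
        ENNReal.ofReal_one, mul_one]
      push_cast
      rfl

end Refining

section History

variable {Ω : Type*} {n : ℕ} {Y : Fin n → Ω → ℝ}

/-- Padding with `0` gives all `history Y i` one codomain; the fibers of `history Y i` are the
events `{Y r = y r for all r < i}`. -/
def history (Y : Fin n → Ω → ℝ) (i : ℕ) (ω : Ω) : Fin n → ℝ :=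
  fun r => if (r : ℕ) < i then Y r ω else 0

lemma history_eq_history_iff {i : ℕ} {ω ω' : Ω} :
    history Y i ω = history Y i ω' ↔ ∀ r : Fin n, (r : ℕ) < i → Y r ω = Y r ω' := by
  simp only [history, funext_iff]
  refine forall_congr' fun r => ?_
  by_cases h : (r : ℕ) < i <;> simp [h]

lemma measurable_history [MeasurableSpace Ω] (hY : ∀ r, Measurable (Y r)) (i : ℕ) :
    Measurable (history Y i) :=
  measurable_pi_lambda _ fun r => by
    unfold history
    split_ifs
    exacts [hY r, measurable_const]

lemma countable_range_history (hY : ∀ r, (range (Y r)).Countable) (i : ℕ) :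
    (range (history Y i)).Countable := by
  refine (countable_pi fun r => (hY r).insert 0).mono ?_
  rintro _ ⟨ω, rfl⟩ r
  unfold history
  split_ifs
  exacts [mem_insert_of_mem _ (mem_range_self ω), mem_insert 0 _]

lemma preimage_history_succ (I : Fin n) (ys : Fin n → ℝ) {ω : Ω}
    (hω : ∀ r, r < I → Y r ω = ys r) :
    history Y (I + 1) ⁻¹' {history Y (I + 1) ω}
      = {x | (∀ r, r < I → Y r x = ys r) ∧ Y I x = Y I ω} := by
  ext x
  simp only [mem_preimage, mem_singleton_iff, mem_ofPred_eq, history_eq_history_iff]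
  constructor
  · intro h
    exact ⟨fun r hr => (h r (Nat.lt_succ_of_lt hr)).trans (hω r hr), h I I.val.lt_succ_self⟩
  · rintro ⟨h, hI⟩ r hr
    rcases Nat.lt_succ_iff_lt_or_eq.1 hr with hr | hr
    · exact (h r hr).trans (hω r hr).symm
    · rwa [Fin.ext hr]

lemma fiberAvgOscillationLE_history [MeasurableSpace Ω] {μ : Measure Ω} {S : Ω → ℝ} {c : Fin n → ℝ}
    (hdiff : ∀ (i : Fin n) (ys : Fin n → ℝ) (y y' : ℝ),
      μ {ω | (∀ r, r < i → Y r ω = ys r) ∧ Y i ω = y} ≠ 0 →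
      μ {ω | (∀ r, r < i → Y r ω = ys r) ∧ Y i ω = y'} ≠ 0 →
      |(∫ ω in {ω | (∀ r, r < i → Y r ω = ys r) ∧ Y i ω = y}, S ω ∂μ) /
          (μ {ω | (∀ r, r < i → Y r ω = ys r) ∧ Y i ω = y}).toReal -
        (∫ ω in {ω | (∀ r, r < i → Y r ω = ys r) ∧ Y i ω = y'}, S ω ∂μ) /
          (μ {ω | (∀ r, r < i → Y r ω = ys r) ∧ Y i ω = y'}).toReal| ≤ c i)
    (I : Fin n) : FiberAvgOscillationLE μ (history Y I) (history Y (I + 1)) S (c I) := by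
  intro ω ω' hωω' h h'
  have hfib := preimage_history_succ I (fun r => Y r ω) fun _ _ => rfl
  have hfib' := preimage_history_succ I (fun r => Y r ω) fun r hr =>
    (history_eq_history_iff.1 hωω' r hr).symm
  rw [hfib] at h
  rw [hfib'] at h'
  rw [fiberAvg, fiberAvg, hfib, hfib']
  exact hdiff I _ _ _ h h'

end History

end ProbabilityTheory

theorem azuma_dependent_sum_general
    {Ω : Type*} [MeasureSpace Ω] [IsProbabilityMeasure (ℙ : Measure Ω)]
    (n : ℕ)
    (Y : Fin n → Ω → ℝ) (hYmeas : ∀ i, Measurable (Y i))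
    (hYcount : ∀ i, (Set.range (Y i)).Countable)
    (S : Ω → ℝ) (hS : S = fun ω => ∑ i, Y i ω)
    (hSint : Integrable S ℙ)
    (c : Fin n → ℝ) (hc : ∀ i, 0 ≤ c i)
    (hdiff : ∀ (i : Fin n) (ys : Fin n → ℝ) (y y' : ℝ),
      ℙ {ω | (∀ r, r < i → Y r ω = ys r) ∧ Y i ω = y} ≠ 0 →
      ℙ {ω | (∀ r, r < i → Y r ω = ys r) ∧ Y i ω = y'} ≠ 0 →
      |(∫ ω in {ω | (∀ r, r < i → Y r ω = ys r) ∧ Y i ω = y}, S ω ∂ℙ) /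
          (ℙ {ω | (∀ r, r < i → Y r ω = ys r) ∧ Y i ω = y}).toReal -
        (∫ ω in {ω | (∀ r, r < i → Y r ω = ys r) ∧ Y i ω = y'}, S ω ∂ℙ) /
          (ℙ {ω | (∀ r, r < i → Y r ω = ys r) ∧ Y i ω = y'}).toReal| ≤ c i)
    (lam : ℝ) (hlam : 0 < lam) :
    ℙ {ω | S ω ≥ (∫ x, S x ∂ℙ) + lam}
        ≤ ENNReal.ofReal (Real.exp (-lam ^ 2 / (2 * ∑ i, c i ^ 2))) ∧
    ℙ {ω | S ω ≤ (∫ x, S x ∂ℙ) - lam}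
        ≤ ENNReal.ofReal (Real.exp (-lam ^ 2 / (2 * ∑ i, c i ^ 2))) := by
  set c' : ℕ → ℝ≥0 := fun i => if h : i < n then (c ⟨i, h⟩).toNNReal else 0
  have hosc : ∀ i < n, FiberAvgOscillationLE ℙ (history Y i) (history Y (i + 1)) S (c' i) :=
    fun i hi => by simpa [c', hi, hc] using fiberAvgOscillationLE_history hdiff ⟨i, hi⟩
  have hsub := hasSubgaussianMGF_sub_integral_of_refining (measurable_history hYmeas)
    (countable_range_history hYcount)
    (fun i ω ω' h => history_eq_history_iff.2 fun r hr =>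
      history_eq_history_iff.1 h r (Nat.lt_succ_of_lt hr))
    (fun ω ω' => history_eq_history_iff.2 fun r hr => absurd hr (Nat.not_lt_zero _))
    (fun ω ω' h => by
      rw [hS]
      exact Finset.sum_congr rfl fun r _ => history_eq_history_iff.1 h r r.isLt)
    hSint hosc
  have hQ : ((∑ i ∈ Finset.range n, c' i ^ 2 : ℝ≥0) : ℝ) = ∑ i, c i ^ 2 := by
    rw [NNReal.coe_sum, ← Fin.sum_univ_eq_sum_range]
    exact Finset.sum_congr rfl fun i _ => by simp [c', hc]
  rw [← hQ]
  constructor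
  · convert hsub.measure_ge_le_ofReal hlam.le using 2
    ext ω
    simp only [ge_iff_le, mem_ofPred_eq, le_sub_iff_add_le']
  · convert hsub.neg.measure_ge_le_ofReal hlam.le using 2
    ext ω
    simp only [mem_ofPred_eq, Pi.neg_apply, neg_sub, le_sub_comm]

/-- Azuma-type concentration for a sum `S = Y₁ + ⋯ + Yₙ` of (not necessarily
independent) countably-valued random variables, under a bounded-difference condition on the
conditional expectations `E[S | Y₁=y₁,…,Y_{i-1}=y_{i-1}, Y_i=y]` (each formalized as
`(∫ S on the event) / ℙ(event)`). -/
theorem azuma_dependent_sum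
    {Ω : Type*} [MeasureSpace Ω] [IsProbabilityMeasure (ℙ : Measure Ω)]
    (n : ℕ) (hn : 1 < n)
    (Y : Fin n → Ω → ℝ) (hYmeas : ∀ i, Measurable (Y i))
    (hYcount : ∀ i, (Set.range (Y i)).Countable)
    (S : Ω → ℝ) (hS : S = fun ω => ∑ i, Y i ω)
    (hSint : Integrable S ℙ)
    (c : Fin n → ℝ) (hc : ∀ i, 0 ≤ c i)
    (hdiff : ∀ (i : Fin n) (ys : Fin n → ℝ) (y y' : ℝ),
      ℙ {ω | (∀ r, r < i → Y r ω = ys r) ∧ Y i ω = y} ≠ 0 →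
      ℙ {ω | (∀ r, r < i → Y r ω = ys r) ∧ Y i ω = y'} ≠ 0 →
      |(∫ ω in {ω | (∀ r, r < i → Y r ω = ys r) ∧ Y i ω = y}, S ω ∂ℙ) /
          (ℙ {ω | (∀ r, r < i → Y r ω = ys r) ∧ Y i ω = y}).toReal -
        (∫ ω in {ω | (∀ r, r < i → Y r ω = ys r) ∧ Y i ω = y'}, S ω ∂ℙ) /
          (ℙ {ω | (∀ r, r < i → Y r ω = ys r) ∧ Y i ω = y'}).toReal| ≤ c i)
    (lam : ℝ) (hlam : 0 < lam) :
    ℙ {ω | S ω ≥ (∫ x, S x ∂ℙ) + lam}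
        ≤ ENNReal.ofReal (Real.exp (-lam ^ 2 / (2 * ∑ i, c i ^ 2))) ∧
    ℙ {ω | S ω ≤ (∫ x, S x ∂ℙ) - lam}
        ≤ ENNReal.ofReal (Real.exp (-lam ^ 2 / (2 * ∑ i, c i ^ 2))) :=
  azuma_dependent_sum_general n Y hYmeas hYcount S hS hSint c hc hdiff lam hlam
end
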